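/- arXiv:1309.4123 — 9 statements merged into one kernel-verified Lean document; each statement's English description precedes it below -/
import Mathlib

section
/- Let L be a Poisson algebra over ℝ, I a Jordan ideal of L, and B a Jordan subalgebra of L satisfying {B, B} ⊆ B + I and {B, B ∩ I} ⊆ I. Then there exists a unique ℝ-bilinear antisymmetric operation β on the quotient module Q = B ⧸ (B ∩ I) such that for all f, g ∈ B and every c ∈ B with c − {f, g} ∈ I one has β(π f, π g) = π c, where π : B → Q is the canonical projection; moreover β satisfies the Leibniz rule β(π(f∘g), π h) = π f ∘ β(π g, π h) + β(π f, π h) ∘ π g with respect to the Jordan product induced on Q by ∘. -/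
/-- A Poisson bracket on a commutative associative ℝ-algebra `L`:
an ℝ-bilinear antisymmetric bracket satisfying the Jacobi identity and the
Leibniz rule with respect to the (Jordan) product of `L`. -/
structure PoissonBracket (L : Type*) [CommRing L] [Algebra ℝ L] where
  bracket : L → L → L
  add_left : ∀ a b c : L, bracket (a + b) c = bracket a c + bracket b c
  smul_left : ∀ (r : ℝ) (a b : L), bracket (r • a) b = r • bracket a b
  antisymm : ∀ a b : L, bracket a b = - bracket b a
  jacobi : ∀ a b c : L,
    bracket a (bracket b c) + bracket b (bracket c a) + bracket c (bracket a b) = 0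
  leibniz : ∀ a b c : L, bracket (a * b) c = a * bracket b c + bracket a c * b

/-- Theorem 2: under `{B,B} ⊆ B + I` and `{B, B ∩ I} ⊆ I` there is a unique
ℝ-bilinear antisymmetric operation `β` on `Q = B ⧸ (B ∩ I)` with
`β (π f) (π g) = π c` whenever `c ∈ B` and `c - {f,g} ∈ I`; moreover `β`
satisfies the Leibniz rule with respect to the Jordan product induced on `Q`. -/
theorem stmt4 {L : Type*} [CommRing L] [Algebra ℝ L] (P : PoissonBracket L)
    (I : Ideal L) (B : Submodule ℝ L)
    (hBmul : ∀ a ∈ B, ∀ b ∈ B, a * b ∈ B)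
    (h1 : ∀ a ∈ B, ∀ b ∈ B, P.bracket a b ∈ B ⊔ Submodule.restrictScalars ℝ I)
    (h2 : ∀ a ∈ B, ∀ b, b ∈ B → b ∈ I → P.bracket a b ∈ I) :
    ∃ β : (↥B ⧸ Submodule.comap B.subtype (Submodule.restrictScalars ℝ I)) →
          (↥B ⧸ Submodule.comap B.subtype (Submodule.restrictScalars ℝ I)) →
          (↥B ⧸ Submodule.comap B.subtype (Submodule.restrictScalars ℝ I)),
      (((∀ x y z, β (x + y) z = β x z + β y z) ∧
        (∀ (r : ℝ) (x y), β (r • x) y = r • β x y) ∧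
        (∀ x y, β x y = - β y x) ∧
        (∀ (f g c : L) (hf : f ∈ B) (hg : g ∈ B) (hc : c ∈ B),
          c - P.bracket f g ∈ I →
          β (Submodule.Quotient.mk ⟨f, hf⟩) (Submodule.Quotient.mk ⟨g, hg⟩) =
            Submodule.Quotient.mk ⟨c, hc⟩)) ∧
        -- the Leibniz rule with respect to the induced Jordan product on the quotient
        (∀ jmul : (↥B ⧸ Submodule.comap B.subtype (Submodule.restrictScalars ℝ I)) →
              (↥B ⧸ Submodule.comap B.subtype (Submodule.restrictScalars ℝ I)) →
              (↥B ⧸ Submodule.comap B.subtype (Submodule.restrictScalars ℝ I)),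
          (∀ (f g : L) (hf : f ∈ B) (hg : g ∈ B),
            jmul (Submodule.Quotient.mk ⟨f, hf⟩) (Submodule.Quotient.mk ⟨g, hg⟩) =
              Submodule.Quotient.mk ⟨f * g, hBmul f hf g hg⟩) →
          ∀ (f g h : L) (hf : f ∈ B) (hg : g ∈ B) (hh : h ∈ B),
            β (Submodule.Quotient.mk ⟨f * g, hBmul f hf g hg⟩)
                (Submodule.Quotient.mk ⟨h, hh⟩) =
              jmul (Submodule.Quotient.mk ⟨f, hf⟩)
                  (β (Submodule.Quotient.mk ⟨g, hg⟩) (Submodule.Quotient.mk ⟨h, hh⟩)) +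
              jmul (β (Submodule.Quotient.mk ⟨f, hf⟩) (Submodule.Quotient.mk ⟨h, hh⟩))
                  (Submodule.Quotient.mk ⟨g, hg⟩))) ∧
      (∀ β' : (↥B ⧸ Submodule.comap B.subtype (Submodule.restrictScalars ℝ I)) →
            (↥B ⧸ Submodule.comap B.subtype (Submodule.restrictScalars ℝ I)) →
            (↥B ⧸ Submodule.comap B.subtype (Submodule.restrictScalars ℝ I)),
        ((∀ x y z, β' (x + y) z = β' x z + β' y z) ∧
         (∀ (r : ℝ) (x y), β' (r • x) y = r • β' x y) ∧
         (∀ x y, β' x y = - β' y x) ∧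
         (∀ (f g c : L) (hf : f ∈ B) (hg : g ∈ B) (hc : c ∈ B),
           c - P.bracket f g ∈ I →
           β' (Submodule.Quotient.mk ⟨f, hf⟩) (Submodule.Quotient.mk ⟨g, hg⟩) =
             Submodule.Quotient.mk ⟨c, hc⟩)) → β' = β) := by
  classical
  -- decomposition of brackets of elements of B
  have hdec : ∀ f g : B, ∃ c : B, (c : L) - P.bracket (f : L) (g : L) ∈ I := by
    intro f g
    have hm := h1 f f.2 g g.2
    rw [Submodule.mem_sup] at hm
    obtain ⟨y, hy, z, hz, hyz⟩ := hm
    refine ⟨⟨y, hy⟩, ?_⟩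
    have : y - P.bracket (f : L) (g : L) = -z := by rw [← hyz]; ring
    rw [Submodule.restrictScalars_mem] at hz
    simpa [this] using neg_mem hz
  choose d hd using hdec
  set J := Submodule.comap B.subtype (Submodule.restrictScalars ℝ I) with hJdef
  have memJ : ∀ a : B, a ∈ J ↔ (a : L) ∈ I := fun a => Iff.rfl
  -- the raw map on representatives
  set β0 : B → B → (↥B ⧸ J) := fun f g => Submodule.Quotient.mk (d f g) with hβ0
  have πeq : ∀ a b : B, (a : L) - (b : L) ∈ I →
      (Submodule.Quotient.mk a : ↥B ⧸ J) = Submodule.Quotient.mk b := by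
    intro a b hab
    rw [Submodule.Quotient.eq]
    exact (memJ (a - b)).2 (by simpa using hab)
  have char : ∀ (f g c : B), (c : L) - P.bracket (f : L) (g : L) ∈ I →
      β0 f g = Submodule.Quotient.mk c := by
    intro f g c hc
    refine πeq _ _ ?_
    have := sub_mem (hd f g) hc
    simpa using this
  -- bracket arithmetic helpers
  have bneg_left : ∀ a b : L, P.bracket (-a) b = -P.bracket a b := by
    intro a b
    have := P.smul_left (-1 : ℝ) a b
    simpa using this
  have bsub_left : ∀ a b c : L, P.bracket (a - b) c = P.bracket a c - P.bracket b c := by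
    intro a b c
    rw [sub_eq_add_neg, P.add_left, bneg_left, sub_eq_add_neg]
  have bsub_right : ∀ a b c : L, P.bracket a (b - c) = P.bracket a b - P.bracket a c := by
    intro a b c
    rw [P.antisymm a (b - c), bsub_left, P.antisymm b a, P.antisymm c a]
    ring
  -- well-definedness on the quotient
  have wd : ∀ f f' g g' : B, (f : L) - (f' : L) ∈ I → (g : L) - (g' : L) ∈ I →
      β0 f g = β0 f' g' := by
    intro f f' g g' hf hg
    refine (char f' g' (d f g) ?_).symm
    have h3 : P.bracket (f : L) (g : L) - P.bracket (f' : L) (g' : L) ∈ I := by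
      have e : P.bracket (f : L) (g : L) - P.bracket (f' : L) (g' : L)
          = P.bracket ((f : L) - (f' : L)) (g : L)
            + P.bracket (f' : L) ((g : L) - (g' : L)) := by
        rw [bsub_left, bsub_right]; ring
      have t1 : P.bracket ((f : L) - (f' : L)) (g : L) ∈ I := by
        rw [P.antisymm]
        exact neg_mem (h2 (g : L) g.2 _ (sub_mem f.2 f'.2) hf)
      have t2 : P.bracket (f' : L) ((g : L) - (g' : L)) ∈ I :=
        h2 (f' : L) f'.2 _ (sub_mem g.2 g'.2) hg
      rw [e]; exact add_mem t1 t2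
    have : (d f g : L) - P.bracket (f' : L) (g' : L)
        = ((d f g : L) - P.bracket (f : L) (g : L))
          + (P.bracket (f : L) (g : L) - P.bracket (f' : L) (g' : L)) := by ring
    rw [this]
    exact add_mem (hd f g) h3
  -- representatives
  have hsurj := Submodule.Quotient.mk_surjective J
  set rep : (↥B ⧸ J) → B := Function.surjInv hsurj with hrepdef
  have hrep : ∀ x : ↥B ⧸ J, (Submodule.Quotient.mk (rep x) : ↥B ⧸ J) = x :=
    Function.surjInv_eq hsurj
  set β : (↥B ⧸ J) → (↥B ⧸ J) → (↥B ⧸ J) := fun x y => β0 (rep x) (rep y) with hβdef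
  have βmk : ∀ f g : B, β (Submodule.Quotient.mk f) (Submodule.Quotient.mk g) = β0 f g := by
    intro f g
    refine wd _ _ _ _ ?_ ?_
    · have h := hrep (Submodule.Quotient.mk f)
      rw [Submodule.Quotient.eq] at h
      simpa using (memJ _).1 h
    · have h := hrep (Submodule.Quotient.mk g)
      rw [Submodule.Quotient.eq] at h
      simpa using (memJ _).1 h
  have compat : ∀ (f g c : L) (hf : f ∈ B) (hg : g ∈ B) (hc : c ∈ B),
      c - P.bracket f g ∈ I →
      β (Submodule.Quotient.mk ⟨f, hf⟩) (Submodule.Quotient.mk ⟨g, hg⟩)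
        = Submodule.Quotient.mk ⟨c, hc⟩ := by
    intro f g c hf hg hc h
    rw [βmk]
    exact char ⟨f, hf⟩ ⟨g, hg⟩ ⟨c, hc⟩ h
  refine ⟨β, ⟨⟨?_, ?_, ?_, compat⟩, ?_⟩, ?_⟩
  · -- additivity in the first argument
    intro x y z
    obtain ⟨f, rfl⟩ := hsurj x
    obtain ⟨g, rfl⟩ := hsurj y
    obtain ⟨h, rfl⟩ := hsurj z
    rw [← Submodule.Quotient.mk_add, βmk, βmk, βmk, ← Submodule.Quotient.mk_add]
    refine char _ _ _ ?_
    have e : ((d f h + d g h : B) : L) - P.bracket ((f + g : B) : L) (h : L)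
        = ((d f h : L) - P.bracket (f : L) (h : L))
          + ((d g h : L) - P.bracket (g : L) (h : L)) := by
      push_cast [P.add_left]
      ring
    rw [e]
    exact add_mem (hd f h) (hd g h)
  · -- ℝ-homogeneity in the first argument
    intro r x y
    obtain ⟨f, rfl⟩ := hsurj x
    obtain ⟨g, rfl⟩ := hsurj y
    rw [← Submodule.Quotient.mk_smul, βmk, βmk, ← Submodule.Quotient.mk_smul]
    refine char _ _ _ ?_
    have e : ((r • d f g : B) : L) - P.bracket ((r • f : B) : L) (g : L)
        = r • ((d f g : L) - P.bracket (f : L) (g : L)) := by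
      rw [show ((r • d f g : B) : L) = r • (d f g : L) from rfl,
        show ((r • f : B) : L) = r • (f : L) from rfl, P.smul_left, smul_sub]
    rw [e]
    exact (Submodule.restrictScalars_mem ℝ I _).1
      ((Submodule.restrictScalars ℝ I).smul_mem r
        ((Submodule.restrictScalars_mem ℝ I _).2 (hd f g)))
  · -- antisymmetry
    intro x y
    obtain ⟨f, rfl⟩ := hsurj x
    obtain ⟨g, rfl⟩ := hsurj y
    rw [βmk, βmk, hβ0, ← Submodule.Quotient.mk_neg]
    refine char _ _ _ ?_
    have e : ((-(d g f) : B) : L) - P.bracket (f : L) (g : L)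
        = -((d g f : L) - P.bracket (g : L) (f : L)) := by
      rw [P.antisymm (f : L) (g : L)]
      push_cast
      ring
    rw [e]
    exact neg_mem (hd g f)
  · -- Leibniz rule
    intro jmul hjm f g h hf hg hh
    have e1 : β (Submodule.Quotient.mk ⟨g, hg⟩) (Submodule.Quotient.mk ⟨h, hh⟩)
        = Submodule.Quotient.mk (d ⟨g, hg⟩ ⟨h, hh⟩) := by rw [βmk]
    have e2 : β (Submodule.Quotient.mk ⟨f, hf⟩) (Submodule.Quotient.mk ⟨h, hh⟩)
        = Submodule.Quotient.mk (d ⟨f, hf⟩ ⟨h, hh⟩) := by rw [βmk]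
    rw [e1, e2]
    have e3 : (Submodule.Quotient.mk (d ⟨g, hg⟩ ⟨h, hh⟩) : ↥B ⧸ J)
        = Submodule.Quotient.mk ⟨(d ⟨g, hg⟩ ⟨h, hh⟩ : L), (d ⟨g, hg⟩ ⟨h, hh⟩).2⟩ := rfl
    have e4 : (Submodule.Quotient.mk (d ⟨f, hf⟩ ⟨h, hh⟩) : ↥B ⧸ J)
        = Submodule.Quotient.mk ⟨(d ⟨f, hf⟩ ⟨h, hh⟩ : L), (d ⟨f, hf⟩ ⟨h, hh⟩).2⟩ := rfl
    rw [e3, e4, hjm f _ hf (d ⟨g, hg⟩ ⟨h, hh⟩).2, hjm _ g (d ⟨f, hf⟩ ⟨h, hh⟩).2 hg,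
      ← Submodule.Quotient.mk_add, βmk]
    refine char _ _ _ ?_
    have e : ((⟨f * (d ⟨g, hg⟩ ⟨h, hh⟩ : L), hBmul f hf _ (d ⟨g, hg⟩ ⟨h, hh⟩).2⟩
          + ⟨(d ⟨f, hf⟩ ⟨h, hh⟩ : L) * g, hBmul _ (d ⟨f, hf⟩ ⟨h, hh⟩).2 g hg⟩ : B) : L)
        - P.bracket ((⟨f * g, hBmul f hf g hg⟩ : B) : L) ((⟨h, hh⟩ : B) : L)
        = f * ((d ⟨g, hg⟩ ⟨h, hh⟩ : L) - P.bracket g h)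
          + ((d ⟨f, hf⟩ ⟨h, hh⟩ : L) - P.bracket f h) * g := by
      show f * (d ⟨g, hg⟩ ⟨h, hh⟩ : L) + (d ⟨f, hf⟩ ⟨h, hh⟩ : L) * g
          - P.bracket (f * g) h = _
      rw [P.leibniz]
      ring
    rw [e]
    exact add_mem (I.mul_mem_left f (hd ⟨g, hg⟩ ⟨h, hh⟩))
      (I.mul_mem_right g (hd ⟨f, hf⟩ ⟨h, hh⟩))
  · -- uniqueness
    intro β' ⟨_, _, _, hcompat⟩
    funext x y
    obtain ⟨f, rfl⟩ := hsurj x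
    obtain ⟨g, rfl⟩ := hsurj y
    rw [βmk]
    have := hcompat (f : L) (g : L) (d f g : L) f.2 g.2 (d f g).2 (hd f g)
    simpa using this
end

section
/- Let L be a Poisson algebra over ℝ, I a Jordan ideal of L, and B a Jordan subalgebra of L satisfying {B, B} ⊆ B + I and {B, B ∩ I} ⊆ I. Suppose there are Jordan subalgebras B₋ ⊆ B ⊆ B₊ with B₋ + I = B + I = B₊ + I, {B₋, B₋} ⊆ B₊, and {B₋, B₊ ∩ I} ⊆ I. Then the bracket induced on B ⧸ (B ∩ I) satisfies the Jacobi identity; concretely, for all f₁, f₂, f₃ ∈ B₋ and all g₁₂, g₂₃, g₃₁ ∈ B₋ with g₁₂ − {f₁, f₂} ∈ I, g₂₃ − {f₂, f₃} ∈ I, g₃₁ − {f₃, f₁} ∈ I, one has {g₁₂, f₃} + {g₂₃, f₁} + {g₃₁, f₂} ∈ I. -/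
/-- Proposition of Section 4: given Jordan subalgebras `B₋ ⊆ B ⊆ B₊` with
`B₋ + I = B + I = B₊ + I`, `{B₋,B₋} ⊆ B₊` and `{B₋, B₊ ∩ I} ⊆ I`, the bracket
induced on `B ⧸ (B ∩ I)` satisfies the Jacobi identity. -/
theorem stmt5 {L : Type*} [CommRing L] [Algebra ℝ L] (P : PoissonBracket L)
    (I : Ideal L) (B Bm Bp : Submodule ℝ L)
    (hBmul : ∀ a ∈ B, ∀ b ∈ B, a * b ∈ B)
    (h1 : ∀ a ∈ B, ∀ b ∈ B, P.bracket a b ∈ B ⊔ Submodule.restrictScalars ℝ I)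
    (h2 : ∀ a ∈ B, ∀ b, b ∈ B → b ∈ I → P.bracket a b ∈ I)
    (hBmmul : ∀ a ∈ Bm, ∀ b ∈ Bm, a * b ∈ Bm)
    (hBpmul : ∀ a ∈ Bp, ∀ b ∈ Bp, a * b ∈ Bp)
    (hmB : Bm ≤ B) (hBp : B ≤ Bp)
    (hsum₁ : Bm ⊔ Submodule.restrictScalars ℝ I = B ⊔ Submodule.restrictScalars ℝ I)
    (hsum₂ : Bp ⊔ Submodule.restrictScalars ℝ I = B ⊔ Submodule.restrictScalars ℝ I)
    (h3 : ∀ a ∈ Bm, ∀ b ∈ Bm, P.bracket a b ∈ Bp)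
    (h4 : ∀ a ∈ Bm, ∀ b, b ∈ Bp → b ∈ I → P.bracket a b ∈ I) :
    ∀ f₁ ∈ Bm, ∀ f₂ ∈ Bm, ∀ f₃ ∈ Bm, ∀ g₁₂ ∈ Bm, ∀ g₂₃ ∈ Bm, ∀ g₃₁ ∈ Bm,
      g₁₂ - P.bracket f₁ f₂ ∈ I → g₂₃ - P.bracket f₂ f₃ ∈ I →
      g₃₁ - P.bracket f₃ f₁ ∈ I →
      P.bracket g₁₂ f₃ + P.bracket g₂₃ f₁ + P.bracket g₃₁ f₂ ∈ I := by
  intro f₁ hf₁ f₂ hf₂ f₃ hf₃ g₁₂ hg₁₂ g₂₃ hg₂₃ g₃₁ hg₃₁ h12 h23 h31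
  have key : ∀ g f a b : L, g ∈ Bm → f ∈ Bm → a ∈ Bm → b ∈ Bm → g - P.bracket a b ∈ I →
      P.bracket (g - P.bracket a b) f ∈ I := by
    intro g f a b hg hf ha hb hI
    have hmem : g - P.bracket a b ∈ Bp :=
      Submodule.sub_mem _ (hBp (hmB hg)) (h3 a ha b hb)
    have h5 := h4 f hf _ hmem hI
    have : P.bracket (g - P.bracket a b) f = - P.bracket f (g - P.bracket a b) :=
      P.antisymm _ _
    rw [this]
    exact neg_mem h5
  have e : ∀ g a b f : L,
      P.bracket g f = P.bracket (g - P.bracket a b) f + P.bracket (P.bracket a b) f := by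
    intro g a b f
    rw [← P.add_left, sub_add_cancel]
  have jz : P.bracket (P.bracket f₁ f₂) f₃ + P.bracket (P.bracket f₂ f₃) f₁ +
      P.bracket (P.bracket f₃ f₁) f₂ = 0 := by
    have hj := P.jacobi f₃ f₁ f₂
    rw [P.antisymm (P.bracket f₁ f₂) f₃, P.antisymm (P.bracket f₂ f₃) f₁,
      P.antisymm (P.bracket f₃ f₁) f₂]
    linear_combination -hj
  have heq : P.bracket g₁₂ f₃ + P.bracket g₂₃ f₁ + P.bracket g₃₁ f₂ =
      P.bracket (g₁₂ - P.bracket f₁ f₂) f₃ + P.bracket (g₂₃ - P.bracket f₂ f₃) f₁ +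
      P.bracket (g₃₁ - P.bracket f₃ f₁) f₂ := by
    rw [e g₁₂ f₁ f₂ f₃, e g₂₃ f₂ f₃ f₁, e g₃₁ f₃ f₁ f₂]
    linear_combination jz
  rw [heq]
  exact add_mem (add_mem (key _ _ _ _ hg₁₂ hf₃ hf₁ hf₂ h12)
    (key _ _ _ _ hg₂₃ hf₁ hf₂ hf₃ h23)) (key _ _ _ _ hg₃₁ hf₂ hf₃ hf₁ h31)
end

section
/- Let L be a Poisson algebra over ℝ and I a Jordan ideal of L. Then the Lie normalizer N = {g ∈ L : {g, f} ∈ I for all f ∈ I} is a Lie-Jordan subalgebra of L: it is an ℝ-subspace closed under both the product ∘ and the bracket {·,·}. -/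
/-- Section 3.2: the Lie normalizer `N = {g : {g, I} ⊆ I}` of a Jordan ideal
`I` is a Lie-Jordan subalgebra: an ℝ-subspace closed under `∘` and `{·,·}`. -/
theorem stmt6 {L : Type*} [CommRing L] [Algebra ℝ L] (P : PoissonBracket L)
    (I : Ideal L) :
    (0 : L) ∈ {g : L | ∀ f ∈ I, P.bracket g f ∈ I} ∧
    ∀ a ∈ {g : L | ∀ f ∈ I, P.bracket g f ∈ I},
      ∀ b ∈ {g : L | ∀ f ∈ I, P.bracket g f ∈ I},
        a + b ∈ {g : L | ∀ f ∈ I, P.bracket g f ∈ I} ∧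
        (∀ r : ℝ, r • a ∈ {g : L | ∀ f ∈ I, P.bracket g f ∈ I}) ∧
        a * b ∈ {g : L | ∀ f ∈ I, P.bracket g f ∈ I} ∧
        P.bracket a b ∈ {g : L | ∀ f ∈ I, P.bracket g f ∈ I} := by

  have hz : ∀ f : L, P.bracket 0 f = 0 := by
    intro f
    have := P.smul_left 0 0 f
    simpa using this
  refine ⟨?_, ?_⟩
  · intro f hf; rw [hz]; exact I.zero_mem
  · intro a ha b hb
    refine ⟨?_, ?_, ?_, ?_⟩
    · intro f hf; rw [P.add_left]; exact I.add_mem (ha f hf) (hb f hf)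
    · intro r f hf; rw [P.smul_left, Algebra.smul_def]; exact I.mul_mem_left _ (ha f hf)
    · intro f hf; rw [P.leibniz]
      exact I.add_mem (I.mul_mem_left _ (hb f hf)) (I.mul_mem_right _ (ha f hf))
    · intro f hf
      have hj := P.jacobi a b f
      have key : P.bracket (P.bracket a b) f
          = P.bracket a (P.bracket b f) + P.bracket b (P.bracket f a) := by
        have h1 : P.bracket f (P.bracket a b) = - P.bracket (P.bracket a b) f :=
          P.antisymm _ _
        rw [h1] at hj
        linear_combination -hj
      rw [key]
      have h2 : P.bracket f a = - P.bracket a f := P.antisymm _ _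
      refine I.add_mem (ha _ (hb f hf)) ?_
      rw [h2]
      exact hb _ (I.neg_mem (ha f hf))
end

section
/- Let L be a Poisson algebra over ℝ, I a Jordan ideal of L, and N = {g ∈ L : {g, f} ∈ I for all f ∈ I} its Lie normalizer. Then N ∩ I is a Lie-Jordan ideal of N: N ∘ (N ∩ I) ⊆ N ∩ I and {N, N ∩ I} ⊆ N ∩ I. Consequently the quotient N ⧸ (N ∩ I) inherits a Poisson algebra structure for which the canonical projection is a homomorphism of both products. -/
namespace LinearMap

variable {R M : Type*} [CommRing R] [AddCommGroup M] [Module R M]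

def restrict₂ (f : M →ₗ[R] M →ₗ[R] M) {p : Submodule R M}
    (hf : ∀ x ∈ p, ∀ y ∈ p, f x y ∈ p) : p →ₗ[R] p →ₗ[R] p :=
  mk₂ R (fun x y => ⟨f x y, hf x x.2 y y.2⟩)
    (fun _ _ _ => Subtype.ext (by simp)) (fun _ _ _ => Subtype.ext (by simp))
    (fun _ _ _ => Subtype.ext (by simp)) (fun _ _ _ => Subtype.ext (by simp))

end LinearMap

namespace Submodule

variable {R M N Q : Type*} [CommRing R] [AddCommGroup M] [AddCommGroup N] [AddCommGroup Q]
  [Module R M] [Module R N] [Module R Q]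

def mapQ₂ (p : Submodule R M) (q : Submodule R N) (r : Submodule R Q) (f : M →ₗ[R] N →ₗ[R] Q)
    (hp : ∀ x ∈ p, ∀ y, f x y ∈ r) (hq : ∀ x, ∀ y ∈ q, f x y ∈ r) :
    M ⧸ p →ₗ[R] N ⧸ q →ₗ[R] Q ⧸ r :=
  (f.compr₂ r.mkQ).liftQ₂ p q
    (fun x hx => LinearMap.ext fun y => (Quotient.mk_eq_zero r).2 (hp x hx y))
    (fun y hy => LinearMap.ext fun x => (Quotient.mk_eq_zero r).2 (hq x y hy))

end Submodule

section IsPoissonAlgebra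

variable (R : Type*) {A B : Type*} [CommRing R] [AddCommGroup A] [Module R A]
  [AddCommGroup B] [Module R B]

def IsPoissonAlgebra (mul br : A → A → A) : Prop :=
  (∀ x y z, mul (x + y) z = mul x z + mul y z) ∧
  (∀ (r : R) (x y), mul (r • x) y = r • mul x y) ∧
  (∀ x y, mul x y = mul y x) ∧
  (∀ x y z, mul (mul x y) z = mul x (mul y z)) ∧
  (∀ x y z, br (x + y) z = br x z + br y z) ∧
  (∀ (r : R) (x y), br (r • x) y = r • br x y) ∧
  (∀ x y, br x y = - br y x) ∧
  (∀ x y z, br x (br y z) + br y (br z x) + br z (br x y) = 0) ∧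
  (∀ x y z, br (mul x y) z = mul x (br y z) + mul (br x z) y)

variable {R} {mul br : A → A → A} {mul' br' : B → B → B}

theorem IsPoissonAlgebra.of_injective (h : IsPoissonAlgebra R mul' br') (ι : A →ₗ[R] B)
    (hι : Function.Injective ι) (hmul : ∀ x y, ι (mul x y) = mul' (ι x) (ι y))
    (hbr : ∀ x y, ι (br x y) = br' (ι x) (ι y)) : IsPoissonAlgebra R mul br := by
  obtain ⟨h₁, h₂, h₃, h₄, h₅, h₆, h₇, h₈, h₉⟩ := h
  refine ⟨fun x y z => hι ?_, fun r x y => hι ?_, fun x y => hι ?_, fun x y z => hι ?_,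
    fun x y z => hι ?_, fun r x y => hι ?_, fun x y => hι ?_, fun x y z => hι ?_,
    fun x y z => hι ?_⟩ <;>
  simp only [hmul, hbr, map_add, map_smul, map_neg, map_zero]
  exacts [h₁ .., h₂ .., h₃ .., h₄ .., h₅ .., h₆ .., h₇ .., h₈ .., h₉ ..]

theorem IsPoissonAlgebra.of_surjective (h : IsPoissonAlgebra R mul br) (π : A →ₗ[R] B)
    (hπ : Function.Surjective π) (hmul : ∀ x y, π (mul x y) = mul' (π x) (π y))
    (hbr : ∀ x y, π (br x y) = br' (π x) (π y)) : IsPoissonAlgebra R mul' br' := by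
  obtain ⟨h₁, h₂, h₃, h₄, h₅, h₆, h₇, h₈, h₉⟩ := h
  refine ⟨hπ.forall₃.2 fun x y z => ?_, fun r => hπ.forall₂.2 fun x y => ?_,
    hπ.forall₂.2 fun x y => ?_, hπ.forall₃.2 fun x y z => ?_, hπ.forall₃.2 fun x y z => ?_,
    fun r => hπ.forall₂.2 fun x y => ?_, hπ.forall₂.2 fun x y => ?_,
    hπ.forall₃.2 fun x y z => ?_, hπ.forall₃.2 fun x y z => ?_⟩ <;>
  simp only [← hmul, ← hbr, ← map_add, ← map_smul, ← map_neg, ← map_zero π]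
  exacts [congrArg π (h₁ ..), congrArg π (h₂ ..), congrArg π (h₃ ..), congrArg π (h₄ ..),
    congrArg π (h₅ ..), congrArg π (h₆ ..), congrArg π (h₇ ..), congrArg π (h₈ ..),
    congrArg π (h₉ ..)]

end IsPoissonAlgebra

namespace PoissonBracket

variable {L : Type*} [CommRing L] [Algebra ℝ L] (P : PoissonBracket L)

theorem bracket_zero_left (b : L) : P.bracket 0 b = 0 := by
  simpa using P.smul_left 0 0 b

theorem bracket_add_right (a b c : L) :
    P.bracket a (b + c) = P.bracket a b + P.bracket a c := by
  rw [P.antisymm, P.add_left, neg_add, ← P.antisymm, ← P.antisymm]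

theorem bracket_smul_right (r : ℝ) (a b : L) : P.bracket a (r • b) = r • P.bracket a b := by
  rw [P.antisymm, P.smul_left, ← smul_neg, ← P.antisymm]

def toLinearMap₂ : L →ₗ[ℝ] L →ₗ[ℝ] L :=
  LinearMap.mk₂ ℝ P.bracket P.add_left P.smul_left P.bracket_add_right P.bracket_smul_right

theorem isPoissonAlgebra : IsPoissonAlgebra ℝ (· * ·) P.bracket :=
  ⟨add_mul, smul_mul_assoc, mul_comm, mul_assoc, P.add_left, P.smul_left, P.antisymm, P.jacobi,
    P.leibniz⟩

variable (I : Ideal L)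

def lieNormalizer : Submodule ℝ L where
  carrier := {g | ∀ f ∈ I, P.bracket g f ∈ I}
  zero_mem' f _ := by simp [bracket_zero_left]
  add_mem' hg hh f hf := by
    rw [P.add_left]
    exact I.add_mem (hg f hf) (hh f hf)
  smul_mem' r g hg f hf := by
    rw [P.smul_left]
    exact I.smul_of_tower_mem r (hg f hf)

variable {P I}

theorem mul_mem_lieNormalizer {g h : L} (hg : g ∈ P.lieNormalizer I)
    (hh : h ∈ P.lieNormalizer I) : g * h ∈ P.lieNormalizer I := fun f hf => by
  rw [P.leibniz]
  exact I.add_mem (I.mul_mem_left g (hh f hf)) (I.mul_mem_right h (hg f hf))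

theorem bracket_mem_of_mem_of_mem_lieNormalizer {g h : L} (hg : g ∈ I)
    (hh : h ∈ P.lieNormalizer I) : P.bracket g h ∈ I := by
  rw [P.antisymm]
  exact I.neg_mem (hh g hg)

theorem bracket_mem_lieNormalizer {g h : L} (hg : g ∈ P.lieNormalizer I)
    (hh : h ∈ P.lieNormalizer I) : P.bracket g h ∈ P.lieNormalizer I := fun f hf => by
  have jacobi : P.bracket (P.bracket g h) f =
      P.bracket g (P.bracket h f) + P.bracket h (P.bracket f g) := by
    linear_combination P.antisymm (P.bracket g h) f - P.jacobi g h f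
  rw [jacobi]
  exact I.add_mem (hg _ (hh f hf)) (hh _ (bracket_mem_of_mem_of_mem_lieNormalizer hf hg))

variable (P I)

abbrev idealInLieNormalizer : Submodule ℝ (P.lieNormalizer I) :=
  (I.restrictScalars ℝ).comap (P.lieNormalizer I).subtype

def quotientMul :
    P.lieNormalizer I ⧸ P.idealInLieNormalizer I →ₗ[ℝ]
      P.lieNormalizer I ⧸ P.idealInLieNormalizer I →ₗ[ℝ]
        P.lieNormalizer I ⧸ P.idealInLieNormalizer I :=
  Submodule.mapQ₂ _ _ _
    ((LinearMap.mul ℝ L).restrict₂ fun _ hg _ hh => mul_mem_lieNormalizer hg hh)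
    (fun _ hg h => I.mul_mem_right (h : L) hg) (fun g _ hh => I.mul_mem_left (g : L) hh)

def quotientBracket :
    P.lieNormalizer I ⧸ P.idealInLieNormalizer I →ₗ[ℝ]
      P.lieNormalizer I ⧸ P.idealInLieNormalizer I →ₗ[ℝ]
        P.lieNormalizer I ⧸ P.idealInLieNormalizer I :=
  Submodule.mapQ₂ _ _ _
    (P.toLinearMap₂.restrict₂ fun _ hg _ hh => bracket_mem_lieNormalizer hg hh)
    (fun _ hg h => bracket_mem_of_mem_of_mem_lieNormalizer hg h.2)
    (fun g _ hh => g.2 _ hh)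

theorem isPoissonAlgebra_quotient :
    IsPoissonAlgebra ℝ (fun x y => P.quotientMul I x y) (fun x y => P.quotientBracket I x y) :=
  (P.isPoissonAlgebra.of_injective (P.lieNormalizer I).subtype Subtype.val_injective
      (fun _ _ => rfl) (fun _ _ => rfl)).of_surjective
    (P.idealInLieNormalizer I).mkQ (Submodule.mkQ_surjective _) (fun _ _ => rfl) fun _ _ => rfl

variable {P I}

theorem quotientMul_mk {f g fg : P.lieNormalizer I} (h : (fg : L) = f * g) :
    P.quotientMul I (Submodule.Quotient.mk f) (Submodule.Quotient.mk g) =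
      Submodule.Quotient.mk fg :=
  congrArg Submodule.Quotient.mk (Subtype.ext h.symm)

theorem quotientBracket_mk {f g h : P.lieNormalizer I} (hfg : (h : L) = P.bracket f g) :
    P.quotientBracket I (Submodule.Quotient.mk f) (Submodule.Quotient.mk g) =
      Submodule.Quotient.mk h :=
  congrArg Submodule.Quotient.mk (Subtype.ext hfg.symm)

end PoissonBracket

/-- Section 3.2: `N ∩ I` is a Lie-Jordan ideal of the Lie normalizer `N` of
`I`, and consequently `N ⧸ (N ∩ I)` inherits a Poisson algebra structure for
which the canonical projection is a homomorphism of both products. -/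
theorem stmt7 {L : Type*} [CommRing L] [Algebra ℝ L] (P : PoissonBracket L)
    (I : Ideal L) :
    -- N ∩ I is a Lie-Jordan ideal of N
    (∀ g x : L, (∀ f ∈ I, P.bracket g f ∈ I) → (∀ f ∈ I, P.bracket x f ∈ I) →
      x ∈ I →
      (((∀ f ∈ I, P.bracket (g * x) f ∈ I) ∧ g * x ∈ I) ∧
       ((∀ f ∈ I, P.bracket (P.bracket g x) f ∈ I) ∧ P.bracket g x ∈ I))) ∧
    -- the quotient N ⧸ (N ∩ I) inherits a Poisson structure
    (∀ B : Submodule ℝ L,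
      (B : Set L) = {g : L | ∀ f ∈ I, P.bracket g f ∈ I} →
      ∃ (mul br :
          (↥B ⧸ Submodule.comap B.subtype (Submodule.restrictScalars ℝ I)) →
          (↥B ⧸ Submodule.comap B.subtype (Submodule.restrictScalars ℝ I)) →
          (↥B ⧸ Submodule.comap B.subtype (Submodule.restrictScalars ℝ I))),
        (∀ x y z, mul (x + y) z = mul x z + mul y z) ∧
        (∀ (r : ℝ) (x y), mul (r • x) y = r • mul x y) ∧
        (∀ x y, mul x y = mul y x) ∧
        (∀ x y z, mul (mul x y) z = mul x (mul y z)) ∧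
        (∀ x y z, br (x + y) z = br x z + br y z) ∧
        (∀ (r : ℝ) (x y), br (r • x) y = r • br x y) ∧
        (∀ x y, br x y = - br y x) ∧
        (∀ x y z, br x (br y z) + br y (br z x) + br z (br x y) = 0) ∧
        (∀ x y z, br (mul x y) z = mul x (br y z) + mul (br x z) y) ∧
        (∀ f g fg : ↥B, (fg : L) = (f : L) * (g : L) →
          mul (Submodule.Quotient.mk f) (Submodule.Quotient.mk g) =
            Submodule.Quotient.mk fg) ∧
        (∀ f g h : ↥B, (h : L) = P.bracket (f : L) (g : L) →
          br (Submodule.Quotient.mk f) (Submodule.Quotient.mk g) =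
            Submodule.Quotient.mk h)) := by
  refine ⟨fun g x hg hx hxI =>
    ⟨⟨PoissonBracket.mul_mem_lieNormalizer hg hx, I.mul_mem_left g hxI⟩,
      PoissonBracket.bracket_mem_lieNormalizer hg hx, hg x hxI⟩, fun B hB => ?_⟩
  obtain rfl : B = P.lieNormalizer I := SetLike.coe_injective hB
  obtain ⟨h₁, h₂, h₃, h₄, h₅, h₆, h₇, h₈, h₉⟩ := P.isPoissonAlgebra_quotient I
  exact ⟨_, _, h₁, h₂, h₃, h₄, h₅, h₆, h₇, h₈, h₉, fun _ _ _ => PoissonBracket.quotientMul_mk,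
    fun _ _ _ => PoissonBracket.quotientBracket_mk⟩
end

section
/- Let V be a real vector space carrying a Lie-Jordan structure with constant ħ ∈ ℝ. On the complexification V × V (pairs (a, b) representing a + ib) define the product (a, b)·(c, d) = (a∘c − b∘d + ħ[a,d] + ħ[b,c], a∘d + b∘c − ħ[a,c] + ħ[b,d]) (corresponding to x·y = x∘y − iħ[x,y]). Then this product is associative: ((u·v)·w) = (u·(v·w)) for all u, v, w ∈ V × V. -/
/-- A Lie-Jordan structure with constant `ħ` on a real vector space `V`: a
symmetric ℝ-bilinear product `∘`, an antisymmetric ℝ-bilinear bracket `[·,·]`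
satisfying the Jacobi identity, the Leibniz rule and the associator identity
`(a∘b)∘c − a∘(b∘c) = ħ²[[a,c],b]`. -/
structure LieJordan (V : Type*) [AddCommGroup V] [Module ℝ V] (hbar : ℝ) where
  jmul : V → V → V
  bracket : V → V → V
  jmul_add_left : ∀ a b c : V, jmul (a + b) c = jmul a c + jmul b c
  jmul_smul_left : ∀ (r : ℝ) (a b : V), jmul (r • a) b = r • jmul a b
  jmul_comm : ∀ a b : V, jmul a b = jmul b a
  bracket_add_left : ∀ a b c : V, bracket (a + b) c = bracket a c + bracket b c
  bracket_smul_left : ∀ (r : ℝ) (a b : V), bracket (r • a) b = r • bracket a b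
  bracket_antisymm : ∀ a b : V, bracket a b = - bracket b a
  jacobi : ∀ a b c : V,
    bracket a (bracket b c) + bracket b (bracket c a) + bracket c (bracket a b) = 0
  leibniz : ∀ a b c : V,
    bracket (jmul a b) c = jmul a (bracket b c) + jmul (bracket a c) b
  associator : ∀ a b c : V,
    jmul (jmul a b) c - jmul a (jmul b c) = (hbar ^ 2) • bracket (bracket a c) b

/-- The product `x·y = x∘y − iħ[x,y]` on the complexification `V × V` (pairs
`(a, b)` representing `a + ib`):
`(a,b)·(c,d) = (a∘c − b∘d + ħ[a,d] + ħ[b,c], a∘d + b∘c − ħ[a,c] + ħ[b,d])`. -/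
def complexMul {V : Type*} [AddCommGroup V] [Module ℝ V] {hbar : ℝ}
    (LJ : LieJordan V hbar) (u v : V × V) : V × V :=
  (LJ.jmul u.1 v.1 - LJ.jmul u.2 v.2 + hbar • LJ.bracket u.1 v.2 +
      hbar • LJ.bracket u.2 v.1,
   LJ.jmul u.1 v.2 + LJ.jmul u.2 v.1 - hbar • LJ.bracket u.1 v.1 +
      hbar • LJ.bracket u.2 v.2)

namespace LieJordanAux

variable {V : Type*} [AddCommGroup V] [Module ℝ V] {hbar : ℝ} (LJ : LieJordan V hbar)

lemma jmul_zero_left (b : V) : LJ.jmul 0 b = 0 := by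
  have h := LJ.jmul_smul_left 0 0 b; simpa using h

lemma jmul_zero_right (a : V) : LJ.jmul a 0 = 0 := by
  rw [LJ.jmul_comm]; exact jmul_zero_left LJ a

lemma bracket_zero_left (b : V) : LJ.bracket 0 b = 0 := by
  have h := LJ.bracket_smul_left 0 0 b; simpa using h

lemma bracket_zero_right (a : V) : LJ.bracket a 0 = 0 := by
  rw [LJ.bracket_antisymm, bracket_zero_left, neg_zero]

lemma jmul_neg_left (a b : V) : LJ.jmul (-a) b = - LJ.jmul a b := by
  have h := LJ.jmul_smul_left (-1) a b; simpa using h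

lemma jmul_neg_right (a b : V) : LJ.jmul a (-b) = - LJ.jmul a b := by
  rw [LJ.jmul_comm, jmul_neg_left, LJ.jmul_comm]

lemma jmul_add_right (a b c : V) : LJ.jmul a (b + c) = LJ.jmul a b + LJ.jmul a c := by
  rw [LJ.jmul_comm, LJ.jmul_add_left, LJ.jmul_comm b, LJ.jmul_comm c]

lemma jmul_smul_right (r : ℝ) (a b : V) : LJ.jmul a (r • b) = r • LJ.jmul a b := by
  rw [LJ.jmul_comm, LJ.jmul_smul_left, LJ.jmul_comm]

lemma bracket_neg_left (a b : V) : LJ.bracket (-a) b = - LJ.bracket a b := by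
  have h := LJ.bracket_smul_left (-1) a b; simpa using h

lemma bracket_neg_right (a b : V) : LJ.bracket a (-b) = - LJ.bracket a b := by
  rw [LJ.bracket_antisymm, bracket_neg_left, neg_neg, LJ.bracket_antisymm b a]

lemma bracket_add_right (a b c : V) :
    LJ.bracket a (b + c) = LJ.bracket a b + LJ.bracket a c := by
  rw [LJ.bracket_antisymm, LJ.bracket_add_left, LJ.bracket_antisymm b,
    LJ.bracket_antisymm c]; abel

lemma bracket_smul_right (r : ℝ) (a b : V) :
    LJ.bracket a (r • b) = r • LJ.bracket a b := by
  rw [LJ.bracket_antisymm, LJ.bracket_smul_left, LJ.bracket_antisymm a b]; simp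

/-- multiplication by `i` on the complexification. -/
def J (u : V × V) : V × V := (-u.2, u.1)

lemma mul_J_left (u v : V × V) :
    complexMul LJ (J u) v = J (complexMul LJ u v) := by
  simp only [complexMul, J, jmul_neg_left, bracket_neg_left, smul_neg]
  ext <;> simp <;> abel

lemma mul_J_right (u v : V × V) :
    complexMul LJ u (J v) = J (complexMul LJ u v) := by
  simp only [complexMul, J, jmul_neg_right, bracket_neg_right, smul_neg]
  ext <;> simp <;> abel

lemma mul_add_left (u u' v : V × V) :
    complexMul LJ (u + u') v = complexMul LJ u v + complexMul LJ u' v := by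
  simp only [complexMul, Prod.fst_add, Prod.snd_add, LJ.jmul_add_left,
    LJ.bracket_add_left, smul_add]
  ext <;> simp <;> abel

lemma mul_add_right (u v v' : V × V) :
    complexMul LJ u (v + v') = complexMul LJ u v + complexMul LJ u v' := by
  simp only [complexMul, Prod.fst_add, Prod.snd_add, jmul_add_right,
    bracket_add_right, smul_add]
  ext <;> simp <;> abel

lemma assoc_real (a c e : V) :
    complexMul LJ (complexMul LJ (a, 0) (c, 0)) (e, 0) =
      complexMul LJ (a, 0) (complexMul LJ (c, 0) (e, 0)) := by
  have jac : LJ.bracket (LJ.bracket a e) c =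
      LJ.bracket (LJ.bracket a c) e - LJ.bracket a (LJ.bracket c e) := by
    have j := LJ.jacobi a c e
    have h1 : LJ.bracket c (LJ.bracket e a) = LJ.bracket (LJ.bracket a e) c := by
      rw [LJ.bracket_antisymm e a, bracket_neg_right, LJ.bracket_antisymm c]; simp
    have h2 : LJ.bracket e (LJ.bracket a c) = - LJ.bracket (LJ.bracket a c) e := by
      rw [LJ.bracket_antisymm]
    rw [h1, h2] at j
    have h3 : LJ.bracket (LJ.bracket a e) c -
        (LJ.bracket (LJ.bracket a c) e - LJ.bracket a (LJ.bracket c e)) = 0 := by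
      rw [← j]; abel
    exact sub_eq_zero.mp h3
  simp only [complexMul, jmul_zero_left, jmul_zero_right, bracket_zero_left,
    bracket_zero_right, smul_zero, add_zero, zero_add, sub_zero, zero_sub,
    jmul_neg_left, jmul_neg_right, bracket_neg_left, bracket_neg_right,
    LJ.jmul_smul_left, jmul_smul_right, LJ.bracket_smul_left, bracket_smul_right,
    smul_neg, neg_neg, smul_smul]
  have ha : LJ.jmul (LJ.jmul a c) e =
      LJ.jmul a (LJ.jmul c e) + (hbar ^ 2) • LJ.bracket (LJ.bracket a e) c := by
    have h := LJ.associator a c e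
    rw [sub_eq_iff_eq_add] at h
    rw [h]; abel
  have hl2 : LJ.bracket a (LJ.jmul c e) =
      LJ.jmul c (LJ.bracket a e) + LJ.jmul (LJ.bracket a c) e := by
    rw [LJ.bracket_antisymm a (LJ.jmul c e), LJ.leibniz c e a,
      LJ.bracket_antisymm e a, LJ.bracket_antisymm c a, jmul_neg_right LJ,
      jmul_neg_left LJ]
    abel
  ext
  · simp only
    rw [ha, jac, smul_sub]
    module
  · simp only
    rw [LJ.leibniz a c e, hl2, LJ.jmul_comm (LJ.bracket a e) c]
    module

end LieJordanAux

/-- Section 2: the complexification of a Lie-Jordan algebra, with the product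
`x·y = x∘y − iħ[x,y]`, is an associative algebra. -/
theorem stmt14 {V : Type*} [AddCommGroup V] [Module ℝ V] (hbar : ℝ)
    (LJ : LieJordan V hbar) :
    ∀ u v w : V × V,
      complexMul LJ (complexMul LJ u v) w = complexMul LJ u (complexMul LJ v w) := by
  open LieJordanAux in
  have P_J1 : ∀ u v w : V × V,
      complexMul LJ (complexMul LJ u v) w = complexMul LJ u (complexMul LJ v w) →
      complexMul LJ (complexMul LJ (J u) v) w
        = complexMul LJ (J u) (complexMul LJ v w) := by
    intro u v w h
    rw [mul_J_left LJ u v, mul_J_left LJ (complexMul LJ u v) w, h,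
      mul_J_left LJ u (complexMul LJ v w)]
  have P_J2 : ∀ u v w : V × V,
      complexMul LJ (complexMul LJ u v) w = complexMul LJ u (complexMul LJ v w) →
      complexMul LJ (complexMul LJ u (J v)) w
        = complexMul LJ u (complexMul LJ (J v) w) := by
    intro u v w h
    rw [mul_J_right LJ u v, mul_J_left LJ (complexMul LJ u v) w, h,
      mul_J_left LJ v w, mul_J_right LJ u (complexMul LJ v w)]
  have P_J3 : ∀ u v w : V × V,
      complexMul LJ (complexMul LJ u v) w = complexMul LJ u (complexMul LJ v w) →
      complexMul LJ (complexMul LJ u v) (J w)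
        = complexMul LJ u (complexMul LJ v (J w)) := by
    intro u v w h
    rw [mul_J_right LJ (complexMul LJ u v) w, h, mul_J_right LJ v w,
      mul_J_right LJ u (complexMul LJ v w)]
  have split : ∀ x : V × V, x = (x.1, 0) + J (x.2, 0) := by
    intro x; simp [J, Prod.ext_iff]
  have step1 : ∀ (a c : V) (w : V × V),
      complexMul LJ (complexMul LJ (a, 0) (c, 0)) w
        = complexMul LJ (a, 0) (complexMul LJ (c, 0) w) := by
    intro a c w
    rw [split w]
    simp only [mul_add_right]
    rw [assoc_real LJ a c w.1, P_J3 _ _ _ (assoc_real LJ a c w.2)]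
  have step2 : ∀ (a : V) (v w : V × V),
      complexMul LJ (complexMul LJ (a, 0) v) w
        = complexMul LJ (a, 0) (complexMul LJ v w) := by
    intro a v w
    rw [split v]
    simp only [mul_add_right, mul_add_left]
    rw [step1 a v.1 w, P_J2 _ _ _ (step1 a v.2 w)]
  intro u v w
  rw [split u]
  simp only [mul_add_left]
  rw [step2 u.1 v w, P_J1 _ _ _ (step2 u.2 v w)]
end

section
/- Let λ : ℝ⁴ → ℝ be a smooth function of the coordinates (x, y₁, y₂, y₃), and for smooth f, g : ℝ⁴ → ℝ define the bracket {f, g} = ∂ₓf·∂_{y₃}g − ∂_{y₃}f·∂ₓg + λ·(∂_{y₁}f·∂_{y₂}g − ∂_{y₂}f·∂_{y₁}g). Then the Jacobi identity {f,{g,h}} + {g,{h,f}} + {h,{f,g}} = 0 holds for all smooth f, g, h : ℝ⁴ → ℝ if and only if ∂ₓλ = 0 and ∂_{y₃}λ = 0 everywhere. -/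
/-- The partial derivative of `f : ℝ⁴ → ℝ` with respect to the `i`-th
coordinate, at the point `p`. -/
noncomputable def pderiv4 (i : Fin 4) (f : (Fin 4 → ℝ) → ℝ) (p : Fin 4 → ℝ) : ℝ :=
  fderiv ℝ f p (Pi.single i 1)

/-- The bracket induced by the bivector `Π_N = ∂ₓ ∧ ∂_{y₃} + λ ∂_{y₁} ∧ ∂_{y₂}`
on functions of the coordinates `(x, y₁, y₂, y₃)` of `ℝ⁴` (coordinates `0`,
`1`, `2`, `3` respectively):
`{f, g} = ∂ₓf ∂_{y₃}g − ∂_{y₃}f ∂ₓg + λ (∂_{y₁}f ∂_{y₂}g − ∂_{y₂}f ∂_{y₁}g)`. -/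
noncomputable def pbr (lam f g : (Fin 4 → ℝ) → ℝ) (p : Fin 4 → ℝ) : ℝ :=
  pderiv4 0 f p * pderiv4 3 g p - pderiv4 3 f p * pderiv4 0 g p +
    lam p * (pderiv4 1 f p * pderiv4 2 g p - pderiv4 2 f p * pderiv4 1 g p)

lemma pderiv4_smooth {f : (Fin 4 → ℝ) → ℝ} (hf : ContDiff ℝ (⊤ : ℕ∞) f) (i : Fin 4) :
    ContDiff ℝ (⊤ : ℕ∞) (pderiv4 i f) := by
  have h1 : ContDiff ℝ (⊤ : ℕ∞) (fderiv ℝ f) := hf.fderiv_right (by simp)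
  exact (ContinuousLinearMap.apply ℝ ℝ (Pi.single i 1)).contDiff.comp h1

lemma pderiv4_diff {f : (Fin 4 → ℝ) → ℝ} (hf : ContDiff ℝ (⊤ : ℕ∞) f) (i : Fin 4)
    (p : Fin 4 → ℝ) : DifferentiableAt ℝ (pderiv4 i f) p :=
  ((pderiv4_smooth hf i).differentiable (by simp)).differentiableAt

lemma pderiv4_add {f g : (Fin 4 → ℝ) → ℝ} {p : Fin 4 → ℝ}
    (hf : DifferentiableAt ℝ f p) (hg : DifferentiableAt ℝ g p) (i : Fin 4) :
    pderiv4 i (fun q => f q + g q) p = pderiv4 i f p + pderiv4 i g p := by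
  simp [pderiv4, fderiv_fun_add hf hg]

lemma pderiv4_sub {f g : (Fin 4 → ℝ) → ℝ} {p : Fin 4 → ℝ}
    (hf : DifferentiableAt ℝ f p) (hg : DifferentiableAt ℝ g p) (i : Fin 4) :
    pderiv4 i (fun q => f q - g q) p = pderiv4 i f p - pderiv4 i g p := by
  simp [pderiv4, fderiv_fun_sub hf hg]

lemma pderiv4_mul {f g : (Fin 4 → ℝ) → ℝ} {p : Fin 4 → ℝ}
    (hf : DifferentiableAt ℝ f p) (hg : DifferentiableAt ℝ g p) (i : Fin 4) :
    pderiv4 i (fun q => f q * g q) p = pderiv4 i f p * g p + f p * pderiv4 i g p := by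
  simp [pderiv4, fderiv_fun_mul hf hg]
  ring

lemma pderiv4_comm {f : (Fin 4 → ℝ) → ℝ} (hf : ContDiff ℝ (⊤ : ℕ∞) f) (i j : Fin 4)
    (p : Fin 4 → ℝ) :
    pderiv4 i (pderiv4 j f) p = pderiv4 j (pderiv4 i f) p := by
  have h1 : ContDiff ℝ (⊤ : ℕ∞) (fderiv ℝ f) := hf.fderiv_right (by simp)
  have h2 : ∀ v w : Fin 4 → ℝ, fderiv ℝ (fun q => fderiv ℝ f q w) p v
      = fderiv ℝ (fderiv ℝ f) p v w := by
    intro v w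
    rw [fderiv_clm_apply ((h1.differentiable (by simp)).differentiableAt)
      (differentiableAt_const _)]
    simp
  show fderiv ℝ (fun q => fderiv ℝ f q (Pi.single j 1)) p (Pi.single i 1)
    = fderiv ℝ (fun q => fderiv ℝ f q (Pi.single i 1)) p (Pi.single j 1)
  rw [h2, h2]
  exact (hf.contDiffAt.isSymmSndFDerivAt (by rw [minSmoothness_of_isRCLikeNormedField]; exact WithTop.coe_le_coe.mpr le_top)) _ _

lemma pderiv4_proj (i j : Fin 4) (p : Fin 4 → ℝ) :
    pderiv4 i (fun q => q j) p = if i = j then 1 else 0 := by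
  have : fderiv ℝ (fun q : Fin 4 → ℝ => q j) p = ContinuousLinearMap.proj j :=
    (ContinuousLinearMap.proj j : (Fin 4 → ℝ) →L[ℝ] ℝ).fderiv
  rw [pderiv4, this]
  simp [Pi.single_apply, eq_comm]

lemma pbr_expand {lam g h : (Fin 4 → ℝ) → ℝ} (hlam : ContDiff ℝ (⊤ : ℕ∞) lam)
    (hg : ContDiff ℝ (⊤ : ℕ∞) g) (hh : ContDiff ℝ (⊤ : ℕ∞) h) (i : Fin 4) (p : Fin 4 → ℝ) :
    pderiv4 i (pbr lam g h) p =
      (pderiv4 i (pderiv4 0 g) p * pderiv4 3 h p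
        + pderiv4 0 g p * pderiv4 i (pderiv4 3 h) p
      - (pderiv4 i (pderiv4 3 g) p * pderiv4 0 h p
        + pderiv4 3 g p * pderiv4 i (pderiv4 0 h) p))
      + (pderiv4 i lam p * (pderiv4 1 g p * pderiv4 2 h p - pderiv4 2 g p * pderiv4 1 h p)
        + lam p * ((pderiv4 i (pderiv4 1 g) p * pderiv4 2 h p
            + pderiv4 1 g p * pderiv4 i (pderiv4 2 h) p)
          - (pderiv4 i (pderiv4 2 g) p * pderiv4 1 h p
            + pderiv4 2 g p * pderiv4 i (pderiv4 1 h) p))) := by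
  have dl : DifferentiableAt ℝ lam p := (hlam.differentiable (by simp)).differentiableAt
  have d03 : DifferentiableAt ℝ (fun q => pderiv4 0 g q * pderiv4 3 h q) p :=
    (pderiv4_diff hg 0 p).mul (pderiv4_diff hh 3 p)
  have d30 : DifferentiableAt ℝ (fun q => pderiv4 3 g q * pderiv4 0 h q) p :=
    (pderiv4_diff hg 3 p).mul (pderiv4_diff hh 0 p)
  have d12 : DifferentiableAt ℝ (fun q => pderiv4 1 g q * pderiv4 2 h q) p :=
    (pderiv4_diff hg 1 p).mul (pderiv4_diff hh 2 p)
  have d21 : DifferentiableAt ℝ (fun q => pderiv4 2 g q * pderiv4 1 h q) p :=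
    (pderiv4_diff hg 2 p).mul (pderiv4_diff hh 1 p)
  have dA : DifferentiableAt ℝ
      (fun q => pderiv4 0 g q * pderiv4 3 h q - pderiv4 3 g q * pderiv4 0 h q) p :=
    d03.sub d30
  have dE : DifferentiableAt ℝ
      (fun q => pderiv4 1 g q * pderiv4 2 h q - pderiv4 2 g q * pderiv4 1 h q) p :=
    d12.sub d21
  have dC : DifferentiableAt ℝ
      (fun q => lam q * (pderiv4 1 g q * pderiv4 2 h q - pderiv4 2 g q * pderiv4 1 h q)) p :=
    dl.mul dE
  have e : pbr lam g h = fun q =>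
      (pderiv4 0 g q * pderiv4 3 h q - pderiv4 3 g q * pderiv4 0 h q)
      + lam q * (pderiv4 1 g q * pderiv4 2 h q - pderiv4 2 g q * pderiv4 1 h q) := rfl
  rw [e, pderiv4_add dA dC i, pderiv4_sub d03 d30 i, pderiv4_mul dl dE i,
    pderiv4_mul (pderiv4_diff hg 0 p) (pderiv4_diff hh 3 p) i,
    pderiv4_mul (pderiv4_diff hg 3 p) (pderiv4_diff hh 0 p) i,
    pderiv4_sub d12 d21 i,
    pderiv4_mul (pderiv4_diff hg 1 p) (pderiv4_diff hh 2 p) i,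
    pderiv4_mul (pderiv4_diff hg 2 p) (pderiv4_diff hh 1 p) i]

lemma pderiv4_const (c : ℝ) (i : Fin 4) (p : Fin 4 → ℝ) :
    pderiv4 i (fun _ => c) p = 0 := by
  simp [pderiv4]

lemma proj_smooth (j : Fin 4) : ContDiff ℝ (⊤ : ℕ∞) (fun q : Fin 4 → ℝ => q j) :=
  (ContinuousLinearMap.proj j : (Fin 4 → ℝ) →L[ℝ] ℝ).contDiff

/-- Example 1: the bracket induced by `Π_N = ∂ₓ ∧ ∂_{y₃} + λ ∂_{y₁} ∧ ∂_{y₂}`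
satisfies the Jacobi identity on smooth functions if and only if
`∂ₓλ = ∂_{y₃}λ = 0` everywhere. -/
theorem stmt15 (lam : (Fin 4 → ℝ) → ℝ) (hlam : ContDiff ℝ (⊤ : ℕ∞) lam) :
    (∀ f g h : (Fin 4 → ℝ) → ℝ,
      ContDiff ℝ (⊤ : ℕ∞) f → ContDiff ℝ (⊤ : ℕ∞) g → ContDiff ℝ (⊤ : ℕ∞) h →
      ∀ p : Fin 4 → ℝ,
        pbr lam f (pbr lam g h) p + pbr lam g (pbr lam h f) p +
          pbr lam h (pbr lam f g) p = 0) ↔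
    (∀ p : Fin 4 → ℝ, pderiv4 0 lam p = 0 ∧ pderiv4 3 lam p = 0) := by
  constructor
  · intro H p
    have e12 : pbr lam (fun q => q 1) (fun q => q 2) = lam := by
      funext q; simp [pbr, pderiv4_proj]
    have e23 : pbr lam (fun q => q 2) (fun q => q 3) = fun _ => (0 : ℝ) := by
      funext q; simp [pbr, pderiv4_proj]
    have e31 : pbr lam (fun q => q 3) (fun q => q 1) = fun _ => (0 : ℝ) := by
      funext q; simp [pbr, pderiv4_proj]
    have e20 : pbr lam (fun q => q 2) (fun q => q 0) = fun _ => (0 : ℝ) := by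
      funext q; simp [pbr, pderiv4_proj]
    have e01 : pbr lam (fun q => q 0) (fun q => q 1) = fun _ => (0 : ℝ) := by
      funext q; simp [pbr, pderiv4_proj]
    constructor
    · have := H (fun q => q 1) (fun q => q 2) (fun q => q 3)
        (proj_smooth 1) (proj_smooth 2) (proj_smooth 3) p
      rw [e23, e31, e12] at this
      simpa [pbr, pderiv4_proj, pderiv4_const] using this
    · have := H (fun q => q 1) (fun q => q 2) (fun q => q 0)
        (proj_smooth 1) (proj_smooth 2) (proj_smooth 0) p
      rw [e20, e01, e12] at this
      simpa [pbr, pderiv4_proj, pderiv4_const] using this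
  · intro H f g h hf hg hh p
    obtain ⟨hl0, hl3⟩ := H p
    simp only [pbr, pbr_expand hlam hg hh, pbr_expand hlam hh hf, pbr_expand hlam hf hg,
      pderiv4_comm hf 1 0, pderiv4_comm hf 2 0, pderiv4_comm hf 2 1,
      pderiv4_comm hf 3 0, pderiv4_comm hf 3 1, pderiv4_comm hf 3 2,
      pderiv4_comm hg 1 0, pderiv4_comm hg 2 0, pderiv4_comm hg 2 1,
      pderiv4_comm hg 3 0, pderiv4_comm hg 3 1, pderiv4_comm hg 3 2,
      pderiv4_comm hh 1 0, pderiv4_comm hh 2 0, pderiv4_comm hh 2 1,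
      pderiv4_comm hh 3 0, pderiv4_comm hh 3 1, pderiv4_comm hh 3 2,
      hl0, hl3]
    ring
end

section
/- Let V be a real vector space carrying a Lie-Jordan structure with constant ħ ∈ ℝ, let B, S ⊆ V be subspaces satisfying B∘B ⊆ B + S, B∘(B∩S) ⊆ S, [B, B] ⊆ B + S, [B, B∩S] ⊆ S, and suppose there are subspaces B₋ ⊆ B ⊆ B₊ closed under ∘ and with B₋ + S = B + S = B₊ + S, B₋∘B₋ ⊆ B₊, B₋∘(B₊∩S) ⊆ S, [B₋, B₋] ⊆ B₊, and [B₋, B₊∩S] ⊆ S. Then the induced bracket on B ⧸ (B∩S) satisfies the Jacobi identity; concretely, for all f₁, f₂, f₃ ∈ B₋ and all g₁₂, g₂₃, g₃₁ ∈ B₋ with g₁₂ − [f₁, f₂] ∈ S, g₂₃ − [f₂, f₃] ∈ S, g₃₁ − [f₃, f₁] ∈ S, one has [g₁₂, f₃] + [g₂₃, f₁] + [g₃₁, f₂] ∈ S. -/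
/-- Section 5: under the conditions guaranteeing the reduction, the induced
bracket on `B ⧸ (B∩S)` satisfies the Jacobi identity. -/
theorem stmt17 {V : Type*} [AddCommGroup V] [Module ℝ V] (hbar : ℝ)
    (LJ : LieJordan V hbar) (B S Bm Bp : Submodule ℝ V)
    (hj1 : ∀ a ∈ B, ∀ b ∈ B, LJ.jmul a b ∈ B ⊔ S)
    (hj2 : ∀ a ∈ B, ∀ b, b ∈ B → b ∈ S → LJ.jmul a b ∈ S)
    (hb1 : ∀ a ∈ B, ∀ b ∈ B, LJ.bracket a b ∈ B ⊔ S)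
    (hb2 : ∀ a ∈ B, ∀ b, b ∈ B → b ∈ S → LJ.bracket a b ∈ S)
    (hmB : Bm ≤ B) (hBp : B ≤ Bp)
    (hBmmul : ∀ a ∈ Bm, ∀ b ∈ Bm, LJ.jmul a b ∈ Bm)
    (hBpmul : ∀ a ∈ Bp, ∀ b ∈ Bp, LJ.jmul a b ∈ Bp)
    (hsum₁ : Bm ⊔ S = B ⊔ S) (hsum₂ : Bp ⊔ S = B ⊔ S)
    (h3 : ∀ a ∈ Bm, ∀ b ∈ Bm, LJ.jmul a b ∈ Bp)
    (h4 : ∀ a ∈ Bm, ∀ b, b ∈ Bp → b ∈ S → LJ.jmul a b ∈ S)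
    (h5 : ∀ a ∈ Bm, ∀ b ∈ Bm, LJ.bracket a b ∈ Bp)
    (h6 : ∀ a ∈ Bm, ∀ b, b ∈ Bp → b ∈ S → LJ.bracket a b ∈ S) :
    ∀ f₁ ∈ Bm, ∀ f₂ ∈ Bm, ∀ f₃ ∈ Bm, ∀ g₁₂ ∈ Bm, ∀ g₂₃ ∈ Bm, ∀ g₃₁ ∈ Bm,
      g₁₂ - LJ.bracket f₁ f₂ ∈ S → g₂₃ - LJ.bracket f₂ f₃ ∈ S →
      g₃₁ - LJ.bracket f₃ f₁ ∈ S →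
      LJ.bracket g₁₂ f₃ + LJ.bracket g₂₃ f₁ + LJ.bracket g₃₁ f₂ ∈ S := by

  intro f₁ hf₁ f₂ hf₂ f₃ hf₃ g₁₂ hg₁₂ g₂₃ hg₂₃ g₃₁ hg₃₁ hs₁ hs₂ hs₃
  have e : ∀ a b c : V, LJ.bracket (a - b) c = LJ.bracket a c - LJ.bracket b c := by
    intro a b c
    have h := LJ.bracket_add_left (a - b) b c
    rw [sub_add_cancel] at h
    exact eq_sub_of_add_eq h.symm
  have hp1 : g₁₂ - LJ.bracket f₁ f₂ ∈ Bp :=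
    Bp.sub_mem (hBp (hmB hg₁₂)) (h5 f₁ hf₁ f₂ hf₂)
  have hp2 : g₂₃ - LJ.bracket f₂ f₃ ∈ Bp :=
    Bp.sub_mem (hBp (hmB hg₂₃)) (h5 f₂ hf₂ f₃ hf₃)
  have hp3 : g₃₁ - LJ.bracket f₃ f₁ ∈ Bp :=
    Bp.sub_mem (hBp (hmB hg₃₁)) (h5 f₃ hf₃ f₁ hf₁)
  have t1 : LJ.bracket (g₁₂ - LJ.bracket f₁ f₂) f₃ ∈ S := by
    rw [LJ.bracket_antisymm]; exact S.neg_mem (h6 f₃ hf₃ _ hp1 hs₁)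
  have t2 : LJ.bracket (g₂₃ - LJ.bracket f₂ f₃) f₁ ∈ S := by
    rw [LJ.bracket_antisymm]; exact S.neg_mem (h6 f₁ hf₁ _ hp2 hs₂)
  have t3 : LJ.bracket (g₃₁ - LJ.bracket f₃ f₁) f₂ ∈ S := by
    rw [LJ.bracket_antisymm]; exact S.neg_mem (h6 f₂ hf₂ _ hp3 hs₃)
  have J := LJ.jacobi f₃ f₁ f₂
  have key : LJ.bracket g₁₂ f₃ + LJ.bracket g₂₃ f₁ + LJ.bracket g₃₁ f₂ =
      LJ.bracket (g₁₂ - LJ.bracket f₁ f₂) f₃ + LJ.bracket (g₂₃ - LJ.bracket f₂ f₃) f₁ +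
        LJ.bracket (g₃₁ - LJ.bracket f₃ f₁) f₂ := by
    rw [e, e, e, LJ.bracket_antisymm (LJ.bracket f₁ f₂) f₃,
      LJ.bracket_antisymm (LJ.bracket f₂ f₃) f₁,
      LJ.bracket_antisymm (LJ.bracket f₃ f₁) f₂]
    have : LJ.bracket g₁₂ f₃ - -LJ.bracket f₃ (LJ.bracket f₁ f₂) +
        (LJ.bracket g₂₃ f₁ - -LJ.bracket f₁ (LJ.bracket f₂ f₃)) +
        (LJ.bracket g₃₁ f₂ - -LJ.bracket f₂ (LJ.bracket f₃ f₁)) =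
        LJ.bracket g₁₂ f₃ + LJ.bracket g₂₃ f₁ + LJ.bracket g₃₁ f₂ +
        (LJ.bracket f₃ (LJ.bracket f₁ f₂) + LJ.bracket f₁ (LJ.bracket f₂ f₃) +
          LJ.bracket f₂ (LJ.bracket f₃ f₁)) := by abel
    rw [this, J, add_zero]
  rw [key]
  exact S.add_mem (S.add_mem t1 t2) t3
end

section
/- Let V be a real vector space carrying a Lie-Jordan structure with constant ħ ∈ ℝ, let B, S ⊆ V be subspaces satisfying B∘B ⊆ B + S, B∘(B∩S) ⊆ S, [B, B] ⊆ B + S, [B, B∩S] ⊆ S, and suppose there are subspaces B₋ ⊆ B ⊆ B₊ closed under ∘ and with B₋ + S = B + S = B₊ + S, B₋∘B₋ ⊆ B₊, B₋∘(B₊∩S) ⊆ S, [B₋, B₋] ⊆ B₊, and [B₋, B₊∩S] ⊆ S. Then the induced operations on B ⧸ (B∩S) satisfy the associator identity; concretely, for all f₁, f₂, f₃ ∈ B₋ and all g₁₂, g₂₃ ∈ B₋ with g₁₂ − f₁∘f₂ ∈ S and g₂₃ − f₂∘f₃ ∈ S, and all h₁₃ ∈ B₋ with h₁₃ − [f₁,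 f₃] ∈ S, one has (g₁₂∘f₃ − f₁∘g₂₃) − ħ²[h₁₃, f₂] ∈ S. -/
/-- Section 5: under the conditions guaranteeing the reduction, the induced
operations on `B ⧸ (B∩S)` satisfy the associator identity. -/
theorem stmt18 {V : Type*} [AddCommGroup V] [Module ℝ V] (hbar : ℝ)
    (LJ : LieJordan V hbar) (B S Bm Bp : Submodule ℝ V)
    (hj1 : ∀ a ∈ B, ∀ b ∈ B, LJ.jmul a b ∈ B ⊔ S)
    (hj2 : ∀ a ∈ B, ∀ b, b ∈ B → b ∈ S → LJ.jmul a b ∈ S)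
    (hb1 : ∀ a ∈ B, ∀ b ∈ B, LJ.bracket a b ∈ B ⊔ S)
    (hb2 : ∀ a ∈ B, ∀ b, b ∈ B → b ∈ S → LJ.bracket a b ∈ S)
    (hmB : Bm ≤ B) (hBp : B ≤ Bp)
    (hBmmul : ∀ a ∈ Bm, ∀ b ∈ Bm, LJ.jmul a b ∈ Bm)
    (hBpmul : ∀ a ∈ Bp, ∀ b ∈ Bp, LJ.jmul a b ∈ Bp)
    (hsum₁ : Bm ⊔ S = B ⊔ S) (hsum₂ : Bp ⊔ S = B ⊔ S)
    (h3 : ∀ a ∈ Bm, ∀ b ∈ Bm, LJ.jmul a b ∈ Bp)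
    (h4 : ∀ a ∈ Bm, ∀ b, b ∈ Bp → b ∈ S → LJ.jmul a b ∈ S)
    (h5 : ∀ a ∈ Bm, ∀ b ∈ Bm, LJ.bracket a b ∈ Bp)
    (h6 : ∀ a ∈ Bm, ∀ b, b ∈ Bp → b ∈ S → LJ.bracket a b ∈ S) :
    ∀ f₁ ∈ Bm, ∀ f₂ ∈ Bm, ∀ f₃ ∈ Bm, ∀ g₁₂ ∈ Bm, ∀ g₂₃ ∈ Bm, ∀ h₁₃ ∈ Bm,
      g₁₂ - LJ.jmul f₁ f₂ ∈ S → g₂₃ - LJ.jmul f₂ f₃ ∈ S →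
      h₁₃ - LJ.bracket f₁ f₃ ∈ S →
      (LJ.jmul g₁₂ f₃ - LJ.jmul f₁ g₂₃) - (hbar ^ 2) • LJ.bracket h₁₃ f₂ ∈ S := by
  intro f₁ hf₁ f₂ hf₂ f₃ hf₃ g₁₂ hg₁₂ g₂₃ hg₂₃ h₁₃ hh₁₃ hS₁₂ hS₂₃ hS₁₃
  have jneg : ∀ a b : V, LJ.jmul (-a) b = - LJ.jmul a b := by
    intro a b
    have := LJ.jmul_smul_left (-1) a b
    simpa using this
  have jsub : ∀ a b c : V, LJ.jmul (a - b) c = LJ.jmul a c - LJ.jmul b c := by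
    intro a b c
    rw [sub_eq_add_neg, LJ.jmul_add_left, jneg, sub_eq_add_neg]
  have bneg : ∀ a b : V, LJ.bracket (-a) b = - LJ.bracket a b := by
    intro a b
    have := LJ.bracket_smul_left (-1) a b
    simpa using this
  have bsub : ∀ a b c : V, LJ.bracket (a - b) c = LJ.bracket a c - LJ.bracket b c := by
    intro a b c
    rw [sub_eq_add_neg, LJ.bracket_add_left, bneg, sub_eq_add_neg]
  have key : (LJ.jmul g₁₂ f₃ - LJ.jmul f₁ g₂₃) - (hbar ^ 2) • LJ.bracket h₁₃ f₂
      = LJ.jmul (g₁₂ - LJ.jmul f₁ f₂) f₃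
        - LJ.jmul (g₂₃ - LJ.jmul f₂ f₃) f₁
        - (hbar ^ 2) • LJ.bracket (h₁₃ - LJ.bracket f₁ f₃) f₂
        + (LJ.jmul (LJ.jmul f₁ f₂) f₃ - LJ.jmul f₁ (LJ.jmul f₂ f₃)
            - (hbar ^ 2) • LJ.bracket (LJ.bracket f₁ f₃) f₂) := by
    rw [jsub, jsub, bsub, smul_sub, LJ.jmul_comm g₂₃ f₁, LJ.jmul_comm (LJ.jmul f₂ f₃) f₁]
    abel
  have hassoc := LJ.associator f₁ f₂ f₃
  have t1 : LJ.jmul (g₁₂ - LJ.jmul f₁ f₂) f₃ ∈ S := by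
    rw [LJ.jmul_comm]
    exact h4 f₃ hf₃ _ (Bp.sub_mem (hBp (hmB hg₁₂)) (h3 f₁ hf₁ f₂ hf₂)) hS₁₂
  have t2 : LJ.jmul (g₂₃ - LJ.jmul f₂ f₃) f₁ ∈ S := by
    rw [LJ.jmul_comm]
    exact h4 f₁ hf₁ _ (Bp.sub_mem (hBp (hmB hg₂₃)) (h3 f₂ hf₂ f₃ hf₃)) hS₂₃
  have t3 : LJ.bracket (h₁₃ - LJ.bracket f₁ f₃) f₂ ∈ S := by
    rw [LJ.bracket_antisymm]
    exact S.neg_mem (h6 f₂ hf₂ _ (Bp.sub_mem (hBp (hmB hh₁₃)) (h5 f₁ hf₁ f₃ hf₃)) hS₁₃)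
  rw [key, hassoc, sub_self, add_zero]
  exact S.sub_mem (S.sub_mem t1 t2) (S.smul_mem _ t3)
end

section
/- Let V be a real vector space carrying a Lie-Jordan structure with constant ħ ∈ ℝ, let B, S ⊆ V be subspaces satisfying B∘B ⊆ B + S, B∘(B∩S) ⊆ S, [B, B] ⊆ B + S, [B, B∩S] ⊆ S, and suppose there are subspaces B₋ ⊆ B ⊆ B₊ closed under ∘ and with B₋ + S = B + S = B₊ + S, B₋∘B₋ ⊆ B₊, B₋∘(B₊∩S) ⊆ S, [B₋, B₋] ⊆ B₊, and [B₋, B₊∩S] ⊆ S. Then the induced operations on B ⧸ (B∩S) satisfy the Leibniz rule; concretely, for all f₁, f₂, f₃ ∈ B₋ and every g₁₂ ∈ B₋ with g₁₂ − f₁∘f₂ ∈ S, and all h₂₃, h₁₃ ∈ B₋ with h₂₃ − [f₂, f₃] ∈ S and h₁₃ − [f₁, f₃] ∈ S, one has [g₁₂, f₃] − (f₁∘h₂₃ + h₁₃∘f₂) ∈ S. -/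
/-- Section 5: under the conditions guaranteeing the reduction, the induced
operations on `B ⧸ (B∩S)` satisfy the Leibniz rule. -/
theorem stmt19 {V : Type*} [AddCommGroup V] [Module ℝ V] (hbar : ℝ)
    (LJ : LieJordan V hbar) (B S Bm Bp : Submodule ℝ V)
    (hj1 : ∀ a ∈ B, ∀ b ∈ B, LJ.jmul a b ∈ B ⊔ S)
    (hj2 : ∀ a ∈ B, ∀ b, b ∈ B → b ∈ S → LJ.jmul a b ∈ S)
    (hb1 : ∀ a ∈ B, ∀ b ∈ B, LJ.bracket a b ∈ B ⊔ S)
    (hb2 : ∀ a ∈ B, ∀ b, b ∈ B → b ∈ S → LJ.bracket a b ∈ S)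
    (hmB : Bm ≤ B) (hBp : B ≤ Bp)
    (hBmmul : ∀ a ∈ Bm, ∀ b ∈ Bm, LJ.jmul a b ∈ Bm)
    (hBpmul : ∀ a ∈ Bp, ∀ b ∈ Bp, LJ.jmul a b ∈ Bp)
    (hsum₁ : Bm ⊔ S = B ⊔ S) (hsum₂ : Bp ⊔ S = B ⊔ S)
    (h3 : ∀ a ∈ Bm, ∀ b ∈ Bm, LJ.jmul a b ∈ Bp)
    (h4 : ∀ a ∈ Bm, ∀ b, b ∈ Bp → b ∈ S → LJ.jmul a b ∈ S)
    (h5 : ∀ a ∈ Bm, ∀ b ∈ Bm, LJ.bracket a b ∈ Bp)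
    (h6 : ∀ a ∈ Bm, ∀ b, b ∈ Bp → b ∈ S → LJ.bracket a b ∈ S) :
    ∀ f₁ ∈ Bm, ∀ f₂ ∈ Bm, ∀ f₃ ∈ Bm, ∀ g₁₂ ∈ Bm, ∀ h₂₃ ∈ Bm, ∀ h₁₃ ∈ Bm,
      g₁₂ - LJ.jmul f₁ f₂ ∈ S → h₂₃ - LJ.bracket f₂ f₃ ∈ S →
      h₁₃ - LJ.bracket f₁ f₃ ∈ S →
      LJ.bracket g₁₂ f₃ - (LJ.jmul f₁ h₂₃ + LJ.jmul h₁₃ f₂) ∈ S := by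
  intro f₁ hf₁ f₂ hf₂ f₃ hf₃ g₁₂ hg h₂₃ hh₂₃ h₁₃ hh₁₃ hgS h23S h13S
  -- subtraction lemmas
  have bsub : ∀ a b c : V, LJ.bracket (a - b) c = LJ.bracket a c - LJ.bracket b c := by
    intro a b c
    have h := LJ.bracket_add_left (a - b) b c
    rw [sub_add_cancel] at h
    rw [eq_sub_iff_add_eq, ← h]
  have jsub : ∀ a b c : V, LJ.jmul (a - b) c = LJ.jmul a c - LJ.jmul b c := by
    intro a b c
    have h := LJ.jmul_add_left (a - b) b c
    rw [sub_add_cancel] at h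
    rw [eq_sub_iff_add_eq, ← h]
  have jsubr : ∀ a b c : V, LJ.jmul a (b - c) = LJ.jmul a b - LJ.jmul a c := by
    intro a b c
    rw [LJ.jmul_comm a (b - c), jsub, LJ.jmul_comm b a, LJ.jmul_comm c a]
  -- membership facts
  have m1 : LJ.bracket (g₁₂ - LJ.jmul f₁ f₂) f₃ ∈ S := by
    rw [LJ.bracket_antisymm]
    exact S.neg_mem (h6 f₃ hf₃ _ (Bp.sub_mem (hBp (hmB hg)) (h3 f₁ hf₁ f₂ hf₂)) hgS)
  have m2 : LJ.jmul f₁ (LJ.bracket f₂ f₃ - h₂₃) ∈ S := by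
    refine h4 f₁ hf₁ _ (Bp.sub_mem (h5 f₂ hf₂ f₃ hf₃) (hBp (hmB hh₂₃))) ?_
    have := S.neg_mem h23S
    simpa using this
  have m3 : LJ.jmul (LJ.bracket f₁ f₃ - h₁₃) f₂ ∈ S := by
    rw [LJ.jmul_comm]
    refine h4 f₂ hf₂ _ (Bp.sub_mem (h5 f₁ hf₁ f₃ hf₃) (hBp (hmB hh₁₃))) ?_
    have := S.neg_mem h13S
    simpa using this
  have key : LJ.bracket g₁₂ f₃ - (LJ.jmul f₁ h₂₃ + LJ.jmul h₁₃ f₂) =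
      LJ.bracket (g₁₂ - LJ.jmul f₁ f₂) f₃ + LJ.jmul f₁ (LJ.bracket f₂ f₃ - h₂₃)
        + LJ.jmul (LJ.bracket f₁ f₃ - h₁₃) f₂ := by
    rw [bsub, jsubr, jsub, LJ.leibniz]
    abel
  rw [key]
  exact S.add_mem (S.add_mem m1 m2) m3
end
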